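/- (Catch-up Lemma) Let s ∈ ℕ and v, w ∈ V, and let t0 ≤ t1 be times satisfying t1 ≥ t0 + Ξ_v^s(t0)/μ. Then L_w(t1) ≥ (t1 − t0) + L_v(t0) − (2s+1)κ·d(v,w). -/

import Mathlib

open Finset Filter Topology Set

variable {V : Type*}

/-- Node `v` satisfies the *fast condition* at time `t`. -/
def fastCond (G : SimpleGraph V) (L : V → ℝ → ℝ) (κ : ℝ) (v : V) (t : ℝ) : Prop :=
  ∃ s : ℕ, (∃ x, G.Adj v x ∧ (2 * (s : ℝ) + 1) * κ ≤ L x t - L v t) ∧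
    ∀ y, G.Adj v y → L v t - L y t ≤ (2 * (s : ℝ) + 1) * κ

/-- Node `v` satisfies the *slow condition* at time `t`. -/
def slowCond (G : SimpleGraph V) (L : V → ℝ → ℝ) (κ : ℝ) (v : V) (t : ℝ) : Prop :=
  ∃ s : ℕ, (∃ x, G.Adj v x ∧ 2 * (s : ℝ) * κ ≤ L v t - L x t) ∧
    ∀ y, G.Adj v y → L y t - L v t ≤ 2 * (s : ℝ) * κ

/-- `Ψ_v^s(t) = max_{w ∈ V} (L_w(t) - L_v(t) - 2sκ·d(v,w))`. -/
noncomputable def Psi [Fintype V] [Nonempty V] (G : SimpleGraph V) (L : V → ℝ → ℝ)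
    (κ : ℝ) (s : ℕ) (v : V) (t : ℝ) : ℝ :=
  univ.sup' univ_nonempty fun w => L w t - L v t - 2 * (s : ℝ) * κ * (G.dist v w)

/-- `Ψ^s(t) = max_{v ∈ V} Ψ_v^s(t)`. -/
noncomputable def PsiMax [Fintype V] [Nonempty V] (G : SimpleGraph V) (L : V → ℝ → ℝ)
    (κ : ℝ) (s : ℕ) (t : ℝ) : ℝ :=
  univ.sup' univ_nonempty fun v => Psi G L κ s v t

/-- `Ξ_v^s(t) = max_{w ∈ V} (L_v(t) - L_w(t) - (2s+1)κ·d(v,w))`. -/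
noncomputable def Xi [Fintype V] [Nonempty V] (G : SimpleGraph V) (L : V → ℝ → ℝ)
    (κ : ℝ) (s : ℕ) (v : V) (t : ℝ) : ℝ :=
  univ.sup' univ_nonempty fun w => L v t - L w t - (2 * (s : ℝ) + 1) * κ * (G.dist v w)

/-- The global skew `𝒢(t) = max_{v,w ∈ V} |L_v(t) - L_w(t)|`. -/
noncomputable def GSkew [Fintype V] [Nonempty V] (L : V → ℝ → ℝ) (t : ℝ) : ℝ :=
  univ.sup' univ_nonempty fun p : V × V => |L p.1 t - L p.2 t|

/-!
With `c = (2s+1)κ`, put `h w t = L w t + c·d(v,w) - t`; the claim is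
`L v t0 - t0 ≤ min_w h w t1`.
Each `h w` is nondecreasing since `L w' ≥ 1`, and a minimiser `w ≠ v` of `h · t` satisfies the
fast condition (its neighbour towards `v` is ahead by at least `c`, all others are behind by at
most `c`), so `h w` grows at rate at least `μ` there. As long as the minimum stays below
`L v t0 - t0 = h v t0 ≤ h v t`, the minimiser is not `v`, so the minimum grows at rate `μ`
from its initial value `≥ L v t0 - t0 - Ξ_v^s(t0)` and reaches `L v t0 - t0` by time
`t0 + Ξ_v^s(t0)/μ`.
-/

namespace SimpleGraph

variable {G : SimpleGraph V}

lemma Connected.exists_adj_dist_add_one_eq (hconn : G.Connected) {u v : V} (huv : u ≠ v) :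
    ∃ x, G.Adj v x ∧ G.dist u x + 1 = G.dist u v := by
  obtain ⟨p, hp⟩ := hconn.exists_walk_length_eq_dist v u
  cases p with
  | nil => exact absurd rfl huv
  | @cons _ x _ hadj q =>
    refine ⟨x, hadj, le_antisymm ?_ ?_⟩
    · rw [dist_comm (u := u) (v := x), dist_comm (u := u), ← hp, Walk.length_cons]
      exact Nat.add_le_add_right (dist_le q) 1
    · have := hconn.dist_triangle (u := u) (v := x) (w := v)
      rw [dist_eq_one_iff_adj.mpr hadj.symm] at this
      exact this

lemma Adj.dist_le_dist_add_one {u v w : V} (hadj : G.Adj v w) : G.dist u w ≤ G.dist u v + 1 := by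
  rcases hadj.diff_dist_adj (u := u) with h | h | h <;> omega

end SimpleGraph

section MinOfFunctions
variable {ι : Type*} [Fintype ι] [Nonempty ι] {h : ι → ℝ → ℝ}

lemma eventually_inf'_add_mul_sub_le {x μ μ' : ℝ} (hdiff : ∀ i, DifferentiableAt ℝ (h i) x)
    (hd : ∀ i, (∀ j, h i x ≤ h j x) → μ ≤ deriv (h i) x) (hμ' : μ' < μ) :
    ∀ᶠ z in 𝓝[>] x, (univ.inf' univ_nonempty fun i => h i x) + μ' * (z - x) ≤
      univ.inf' univ_nonempty fun i => h i z := by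
  set φx := univ.inf' univ_nonempty fun i => h i x
  have hφx : ∀ i, φx ≤ h i x := fun i => inf'_le _ (mem_univ i)
  suffices ∀ i, ∀ᶠ z in 𝓝[>] x, φx + μ' * (z - x) ≤ h i z by
    filter_upwards [eventually_all.mpr this] with z hz using le_inf' _ _ fun i _ => hz i
  intro i
  rcases (hφx i).eq_or_lt with hmin | hlt
  · have hslope : ∀ᶠ z in 𝓝[>] x, μ' < slope (h i) x z :=
      ((hasDerivAt_iff_tendsto_slope.mp (hdiff i).hasDerivAt).mono_left
        (nhdsWithin_mono x fun _ hz => ne_of_gt hz)).eventually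
        (eventually_gt_nhds (hμ'.trans_le (hd i fun j => hmin ▸ hφx j)))
    filter_upwards [hslope, self_mem_nhdsWithin] with z hz (hxz : x < z)
    rw [slope_def_field, lt_div_iff₀ (sub_pos.mpr hxz)] at hz
    linarith
  · have hcont : ContinuousAt (fun z => h i z - μ' * (z - x)) x := by
      have := (hdiff i).continuousAt
      fun_prop
    filter_upwards [nhdsWithin_le_nhds (hcont.eventually (lt_mem_nhds (by simpa using hlt)))]
      with z hz
    linarith

lemma inf'_add_mul_sub_le_of_le_deriv {a b μ : ℝ} (hab : a ≤ b)
    (hdiff : ∀ i, Differentiable ℝ (h i))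
    (hd : ∀ t ∈ Ico a b, ∀ i, (∀ j, h i t ≤ h j t) → μ ≤ deriv (h i) t) :
    (univ.inf' univ_nonempty fun i => h i a) + μ * (b - a) ≤
      univ.inf' univ_nonempty fun i => h i b := by
  set φ : ℝ → ℝ := fun t => univ.inf' univ_nonempty fun i => h i t
  have hφ : Continuous φ := Continuous.finset_inf'_apply _ fun i _ => (hdiff i).continuous
  have key := image_le_of_liminf_slope_right_le_deriv_boundary
    (f := fun t => φ a + μ * (t - a) - φ t) (B := fun _ => 0) (B' := fun _ => 0)
    (by fun_prop) (by simp) continuousOn_const (fun _ _ => hasDerivWithinAt_const _ _ _) ?_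
    ⟨hab, le_rfl⟩
  · exact sub_nonpos.mp key
  intro x hx r hr
  refine Eventually.frequently ?_
  filter_upwards [eventually_inf'_add_mul_sub_le (μ' := μ - r / 2) (fun i => (hdiff i) x)
    (hd x hx) (by linarith), self_mem_nhdsWithin] with z hz (hxz : x < z)
  change φ x + _ ≤ φ z at hz
  rw [slope_def_field, div_lt_iff₀ (sub_pos.mpr hxz)]
  nlinarith

lemma le_inf'_of_le_deriv_below {a b μ M : ℝ} (hab : a ≤ b)
    (hdiff : ∀ i, Differentiable ℝ (h i)) (hmono : ∀ i, MonotoneOn (h i) (Icc a b))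
    (hd : ∀ t ∈ Ico a b, ∀ i, (∀ j, h i t ≤ h j t) → h i t < M → μ ≤ deriv (h i) t)
    (hM : M ≤ (univ.inf' univ_nonempty fun i => h i a) + μ * (b - a)) :
    M ≤ univ.inf' univ_nonempty fun i => h i b := by
  by_contra! hb
  refine (hM.trans (inf'_add_mul_sub_le_of_le_deriv hab hdiff fun t ht i hmin => ?_)).not_gt hb
  refine hd t ht i hmin (lt_of_le_of_lt (le_inf' _ _ fun j _ => ?_) hb)
  exact (hmin j).trans (hmono j ⟨ht.1, ht.2.le⟩ ⟨hab, le_rfl⟩ ht.2.le)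

end MinOfFunctions

lemma le_Xi [Fintype V] [Nonempty V] (G : SimpleGraph V) (L : V → ℝ → ℝ) (κ : ℝ)
    (s : ℕ) (v w : V) (t : ℝ) :
    L v t - L w t - (2 * (s : ℝ) + 1) * κ * (G.dist v w) ≤ Xi G L κ s v t :=
  le_sup' (fun w => L v t - L w t - (2 * (s : ℝ) + 1) * κ * (G.dist v w)) (mem_univ w)

lemma fastCond_of_forall_add_dist_le {G : SimpleGraph V} (hconn : G.Connected)
    {L : V → ℝ → ℝ} {κ : ℝ} (hκ : 0 ≤ κ) (s : ℕ) {v i : V} {t : ℝ}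
    (hvi : v ≠ i)
    (hmin : ∀ j, L i t + (2 * (s : ℝ) + 1) * κ * (G.dist v i) ≤
      L j t + (2 * (s : ℝ) + 1) * κ * (G.dist v j)) :
    fastCond G L κ i t := by
  have hc : 0 ≤ (2 * (s : ℝ) + 1) * κ := by positivity
  obtain ⟨x, hix, hdist⟩ := hconn.exists_adj_dist_add_one_eq hvi
  refine ⟨s, ⟨x, hix, ?_⟩, fun y hiy => ?_⟩
  · have hdist' : (G.dist v x : ℝ) + 1 = G.dist v i := by exact_mod_cast hdist
    have := hmin x
    rw [← hdist'] at this
    linear_combination this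
  · have hdist' : (G.dist v y : ℝ) ≤ G.dist v i + 1 := by
      exact_mod_cast hiy.dist_le_dist_add_one
    nlinarith [hmin y, mul_le_mul_of_nonneg_left hdist' hc]

theorem stmt_7_general [Fintype V] [Nonempty V] (G : SimpleGraph V) (hconn : G.Connected)
    (L : V → ℝ → ℝ) (κ ρ μ : ℝ) (hκ : 0 < κ) (hρ : 0 < ρ) (hρμ : ρ < μ)
    (hdiff : ∀ v, Differentiable ℝ (L v))
    (hrate : ∀ v u, 0 ≤ u → 1 ≤ deriv (L v) u ∧ deriv (L v) u ≤ (1 + μ) * (1 + ρ))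
    (hfastI : ∀ v u, 0 ≤ u → fastCond G L κ v u → 1 + μ ≤ deriv (L v) u)
    (s : ℕ) (v w : V) (t0 t1 : ℝ) (ht0 : 0 ≤ t0) (ht01 : t0 ≤ t1)
    (hcatch : t0 + Xi G L κ s v t0 / μ ≤ t1) :
    (t1 - t0) + L v t0 - (2 * (s : ℝ) + 1) * κ * (G.dist v w) ≤ L w t1 := by
  set c := (2 * (s : ℝ) + 1) * κ
  set h : V → ℝ → ℝ := fun i t => L i t + c * G.dist v i - t
  have hdiffh : ∀ i, Differentiable ℝ (h i) := fun i =>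
    ((hdiff i).add_const _).sub differentiable_id
  have hderiv : ∀ i t, deriv (h i) t = deriv (L i) t - 1 := fun i t =>
    (((hdiff i t).hasDerivAt.add_const _).sub (hasDerivAt_id t)).deriv
  have hmono : ∀ i, MonotoneOn (h i) (Icc t0 t1) := fun i =>
    monotoneOn_of_deriv_nonneg (convex_Icc t0 t1) (hdiffh i).continuous.continuousOn
      (hdiffh i).differentiableOn fun u hu => by
        rw [interior_Icc] at hu
        linarith [hderiv i u, (hrate i u (ht0.trans hu.1.le)).1]
  have hXi : Xi G L κ s v t0 ≤ μ * (t1 - t0) := by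
    have hμ : 0 < μ := hρ.trans hρμ
    rw [← div_le_iff₀' hμ]
    linarith
  have hvt0 : h v t0 = L v t0 - t0 := by simp [h]
  suffices L v t0 - t0 ≤ univ.inf' univ_nonempty fun i => h i t1 by
    have hw : L v t0 - t0 ≤ h w t1 := this.trans (inf'_le _ (mem_univ w))
    simp only [h] at hw
    linarith
  refine le_inf'_of_le_deriv_below (μ := μ) ht01 hdiffh hmono (fun t ht i hmin hlt => ?_) ?_
  · have hvi : v ≠ i := by
      rintro rfl
      linarith [hmono v ⟨le_rfl, ht01⟩ ⟨ht.1, ht.2.le⟩ ht.1]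
    have := hfastI i t (ht0.trans ht.1) (fastCond_of_forall_add_dist_le hconn hκ.le s hvi
      fun j => by linarith [hmin j])
    linarith [hderiv i t]
  · have : L v t0 - t0 - Xi G L κ s v t0 ≤ univ.inf' univ_nonempty fun i => h i t0 :=
      le_inf' _ _ fun i _ => by linarith [le_Xi G L κ s v i t0]
    linarith

/-- Catch-up Lemma. -/
theorem stmt_7 [Fintype V] [Nonempty V] (G : SimpleGraph V) (hconn : G.Connected)
    (L : V → ℝ → ℝ) (κ ρ μ : ℝ) (hκ : 0 < κ) (hρ : 0 < ρ) (hρμ : ρ < μ)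
    (hdiff : ∀ v, Differentiable ℝ (L v))
    (hrate : ∀ v u, 0 ≤ u → 1 ≤ deriv (L v) u ∧ deriv (L v) u ≤ (1 + μ) * (1 + ρ))
    (hfastI : ∀ v u, 0 ≤ u → fastCond G L κ v u → 1 + μ ≤ deriv (L v) u)
    (hslowI : ∀ v u, 0 ≤ u → slowCond G L κ v u → deriv (L v) u ≤ 1 + ρ)
    (s : ℕ) (v w : V) (t0 t1 : ℝ) (ht0 : 0 ≤ t0) (ht01 : t0 ≤ t1)
    (hcatch : t0 + Xi G L κ s v t0 / μ ≤ t1) :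
    (t1 - t0) + L v t0 - (2 * (s : ℝ) + 1) * κ * (G.dist v w) ≤ L w t1 :=
  stmt_7_general G hconn L κ ρ μ hκ hρ hρμ hdiff hrate hfastI s v w t0 t1 ht0 ht01 hcatch
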